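/- Let R' = k[m², m³, n², n³] and let M be an R'-module with property [P2]. Then the longer sequence N⊕N →(ξ η) N →ξη N →(ξ,η)ᵀ N⊕N →[[ξ,0],[η,−ξ],[0,η]] N⊕N⊕N is exact at each interior position, where N is the module of 2×2 matrices over M. -/

import Mathlib

open MvPolynomial

universe u v

/-- The subalgebra `R' = k[m², m³, n², n³]` of `k[m,n]`, with `m = X 0`, `n = X 1`. -/
noncomputable def Rc2 (k : Type u) [Field k] : Subalgebra k (MvPolynomial (Fin 2) k) :=
  Algebra.adjoin k {(X 0 : MvPolynomial (Fin 2) k) ^ 2, (X 0 : MvPolynomial (Fin 2) k) ^ 3,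
    (X 1 : MvPolynomial (Fin 2) k) ^ 2, (X 1 : MvPolynomial (Fin 2) k) ^ 3}

/-- The element `m²` of `R'`. -/
noncomputable def mm2 (k : Type u) [Field k] : Rc2 k :=
  ⟨(X 0 : MvPolynomial (Fin 2) k) ^ 2, Algebra.subset_adjoin (Set.mem_insert _ _)⟩

/-- The element `m³` of `R'`. -/
noncomputable def mm3 (k : Type u) [Field k] : Rc2 k :=
  ⟨(X 0 : MvPolynomial (Fin 2) k) ^ 3,
    Algebra.subset_adjoin (Set.mem_insert_of_mem _ (Set.mem_insert _ _))⟩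

/-- The element `n²` of `R'`. -/
noncomputable def nn2 (k : Type u) [Field k] : Rc2 k :=
  ⟨(X 1 : MvPolynomial (Fin 2) k) ^ 2,
    Algebra.subset_adjoin (Set.mem_insert_of_mem _ (Set.mem_insert_of_mem _
      (Set.mem_insert _ _)))⟩

/-- The element `n³` of `R'`. -/
noncomputable def nn3 (k : Type u) [Field k] : Rc2 k :=
  ⟨(X 1 : MvPolynomial (Fin 2) k) ^ 3,
    Algebra.subset_adjoin (Set.mem_insert_of_mem _ (Set.mem_insert_of_mem _
      (Set.mem_insert_of_mem _ rfl)))⟩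

/-- Left multiplication of a 2×2 matrix over `M` by the matrix `[[m³, −m²],[m⁴, −m³]]`. -/
noncomputable def xiMap (k : Type u) [Field k] (M : Type v) [AddCommGroup M]
    [Module (Rc2 k) M] (A : Fin 2 → Fin 2 → M) : Fin 2 → Fin 2 → M :=
  ![![mm3 k • A 0 0 - mm2 k • A 1 0, mm3 k • A 0 1 - mm2 k • A 1 1],
    ![(mm2 k * mm2 k) • A 0 0 - mm3 k • A 1 0, (mm2 k * mm2 k) • A 0 1 - mm3 k • A 1 1]]

/-- Right multiplication of a 2×2 matrix over `M` by the matrix `[[n³, n⁴],[−n², −n³]]`. -/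
noncomputable def etaMap (k : Type u) [Field k] (M : Type v) [AddCommGroup M]
    [Module (Rc2 k) M] (A : Fin 2 → Fin 2 → M) : Fin 2 → Fin 2 → M :=
  ![![nn3 k • A 0 0 - nn2 k • A 0 1, (nn2 k * nn2 k) • A 0 0 - nn3 k • A 0 1],
    ![nn3 k • A 1 0 - nn2 k • A 1 1, (nn2 k * nn2 k) • A 1 0 - nn3 k • A 1 1]]

/-- Property [P2] for an `R'`-module `M`: with `N` the 2×2 matrices over `M`, the complex
`N →ξη N →(ξ,η) N ⊕ N` is exact in the middle. -/
noncomputable def HasP2 (k : Type u) [Field k] (M : Type v) [AddCommGroup M]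
    [Module (Rc2 k) M] : Prop :=
  Function.Exact (fun A : Fin 2 → Fin 2 → M => xiMap k M (etaMap k M A))
    (fun A : Fin 2 → Fin 2 → M => (xiMap k M A, etaMap k M A))

/-! For commuting square-zero endomorphisms `ξ, η` of an abelian group, property [P2] says
`ker ξ ∩ ker η = im ξη`. Exactness at the two outer positions is then a diagram chase: each
correction of a candidate preimage lies in `ker ξ ∩ ker η`, hence is of the form `ξη y`. -/

section CommutingSquareZero

variable {N : Type*} [AddCommGroup N] {ξ η : N →+ N}

lemma exists_comp_eq_of_exact
    (hexact : Function.Exact (fun x => ξ (η x)) (fun x => (ξ x, η x)))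
    {x : N} (hξx : ξ x = 0) (hηx : η x = 0) : ∃ y, ξ (η y) = x :=
  (hexact x).mp (Prod.ext hξx hηx)

lemma exact_add_comp_of_exact (hξ : ∀ x, ξ (ξ x) = 0) (hη : ∀ x, η (η x) = 0)
    (hξη : ∀ x, ξ (η x) = η (ξ x))
    (hexact : Function.Exact (fun x => ξ (η x)) (fun x => (ξ x, η x))) :
    Function.Exact (fun p : N × N => ξ p.1 + η p.2) (fun x => ξ (η x)) := by
  intro x
  constructor
  · intro (hx : ξ (η x) = 0)
    obtain ⟨b, hb⟩ := exists_comp_eq_of_exact hexact (hξ x) (by rw [← hξη, hx])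
    obtain ⟨c, hc⟩ := exists_comp_eq_of_exact hexact hx (hη x)
    obtain ⟨d, hd⟩ := exists_comp_eq_of_exact hexact (x := x - η b - ξ c)
      (by simp [hξ, hb]) (by simp [hη, ← hξη, hc])
    exact ⟨(c + η d, b), by simp [hd]⟩
  · rintro ⟨p, rfl⟩
    simp [hη, ← hξη, hξ]

lemma exact_prod_triple_of_exact (hξ : ∀ x, ξ (ξ x) = 0) (hη : ∀ x, η (η x) = 0)
    (hξη : ∀ x, ξ (η x) = η (ξ x))
    (hexact : Function.Exact (fun x => ξ (η x)) (fun x => (ξ x, η x))) :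
    Function.Exact (fun x => (ξ x, η x))
      (fun p : N × N => (ξ p.1, η p.1 - ξ p.2, η p.2)) := by
  rintro ⟨p, q⟩
  constructor
  · intro h
    simp only [Prod.mk_eq_zero, sub_eq_zero] at h
    obtain ⟨hξp, hηp, hηq⟩ := h
    obtain ⟨c, hc⟩ := exists_comp_eq_of_exact hexact (x := η p) (by rw [hηp, hξ]) (hη p)
    obtain ⟨d, hd⟩ := exists_comp_eq_of_exact hexact (x := p - ξ c)
      (by simp [hξp, hξ]) (by simp [← hξη, hc])
    obtain ⟨e, he⟩ := exists_comp_eq_of_exact hexact (x := q - η c)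
      (by simp [hc, hηp]) (by simp [hη, hηq])
    refine ⟨c + η d + ξ e, ?_⟩
    simp only [map_add, hξ, hη, hd, ← hξη, he, Prod.mk.injEq]
    constructor <;> abel
  · rintro ⟨x, hx⟩
    simp only [Prod.mk.injEq] at hx
    obtain ⟨rfl, rfl⟩ := hx
    simp [hξ, hη, hξη]

end CommutingSquareZero

section TwoByTwo

variable (k : Type u) [Field k] (M : Type v) [AddCommGroup M] [Module (Rc2 k) M]

lemma mm3_sq : mm3 k ^ 2 = mm2 k ^ 3 :=
  Subtype.ext (by simp only [SubmonoidClass.coe_pow, mm2, mm3]; ring)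

lemma nn3_sq : nn3 k ^ 2 = nn2 k ^ 3 :=
  Subtype.ext (by simp only [SubmonoidClass.coe_pow, nn2, nn3]; ring)

noncomputable def xiHom : (Fin 2 → Fin 2 → M) →+ (Fin 2 → Fin 2 → M) :=
  AddMonoidHom.mk' (xiMap k M) fun A B => by
    ext i j
    fin_cases i <;> fin_cases j <;>
      simp only [xiMap, Fin.isValue, Fin.zero_eta, Fin.mk_one, Pi.add_apply, Matrix.cons_val',
        Matrix.cons_val_zero, Matrix.cons_val_one, Matrix.cons_val_fin_one] <;> module

noncomputable def etaHom : (Fin 2 → Fin 2 → M) →+ (Fin 2 → Fin 2 → M) :=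
  AddMonoidHom.mk' (etaMap k M) fun A B => by
    ext i j
    fin_cases i <;> fin_cases j <;>
      simp only [etaMap, Fin.isValue, Fin.zero_eta, Fin.mk_one, Pi.add_apply, Matrix.cons_val',
        Matrix.cons_val_zero, Matrix.cons_val_one, Matrix.cons_val_fin_one] <;> module

lemma xiMap_xiMap (A : Fin 2 → Fin 2 → M) : xiMap k M (xiMap k M A) = 0 := by
  have h := mm3_sq k
  ext i j
  fin_cases i <;> fin_cases j <;>
    simp only [xiMap, Fin.isValue, Fin.zero_eta, Fin.mk_one, Pi.zero_apply, Matrix.cons_val',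
      Matrix.cons_val_zero, Matrix.cons_val_one, Matrix.cons_val_fin_one]
  · linear_combination (norm := module) h • A 0 0
  · linear_combination (norm := module) h • A 0 1
  · linear_combination (norm := module) h • A 1 0
  · linear_combination (norm := module) h • A 1 1

lemma etaMap_etaMap (A : Fin 2 → Fin 2 → M) : etaMap k M (etaMap k M A) = 0 := by
  have h := nn3_sq k
  ext i j
  fin_cases i <;> fin_cases j <;>
    simp only [etaMap, Fin.isValue, Fin.zero_eta, Fin.mk_one, Pi.zero_apply, Matrix.cons_val',
      Matrix.cons_val_zero, Matrix.cons_val_one, Matrix.cons_val_fin_one]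
  · linear_combination (norm := module) h • A 0 0
  · linear_combination (norm := module) h • A 0 1
  · linear_combination (norm := module) h • A 1 0
  · linear_combination (norm := module) h • A 1 1

lemma xiMap_etaMap (A : Fin 2 → Fin 2 → M) :
    xiMap k M (etaMap k M A) = etaMap k M (xiMap k M A) := by
  ext i j
  fin_cases i <;> fin_cases j <;>
    simp only [xiMap, etaMap, Fin.isValue, Fin.zero_eta, Fin.mk_one, Matrix.cons_val',
      Matrix.cons_val_zero, Matrix.cons_val_one, Matrix.cons_val_fin_one] <;> module

end TwoByTwo

theorem stmt_9 (k : Type u) [Field k] (M : Type v) [AddCommGroup M] [Module (Rc2 k) M]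
    (hP2 : HasP2 k M) :
    Function.Exact
        (fun p : (Fin 2 → Fin 2 → M) × (Fin 2 → Fin 2 → M) =>
          xiMap k M p.1 + etaMap k M p.2)
        (fun A : Fin 2 → Fin 2 → M => xiMap k M (etaMap k M A)) ∧
    Function.Exact (fun A : Fin 2 → Fin 2 → M => xiMap k M (etaMap k M A))
        (fun A : Fin 2 → Fin 2 → M => (xiMap k M A, etaMap k M A)) ∧
    Function.Exact (fun A : Fin 2 → Fin 2 → M => (xiMap k M A, etaMap k M A))
        (fun p : (Fin 2 → Fin 2 → M) × (Fin 2 → Fin 2 → M) =>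
          (xiMap k M p.1, etaMap k M p.1 - xiMap k M p.2, etaMap k M p.2)) :=
  ⟨exact_add_comp_of_exact (ξ := xiHom k M) (η := etaHom k M)
      (xiMap_xiMap k M) (etaMap_etaMap k M) (xiMap_etaMap k M) hP2,
    hP2,
    exact_prod_triple_of_exact (ξ := xiHom k M) (η := etaHom k M)
      (xiMap_xiMap k M) (etaMap_etaMap k M) (xiMap_etaMap k M) hP2⟩
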